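/- Let A = r·e^{iθ} with r > 0, and B, C ∈ ℂ. Then { Z ∈ ℂ : A·Z² + B·Z + C ≽ 0 } = e^{−iθ/2}·D^{1/2}((B² − 4AC)/(4rA)) − B/(2A), i.e., Z is a solution if and only if e^{iθ/2}·(Z + B/(2A)) squared lies in D((B² − 4AC)/(4rA)). -/

import Mathlib

def CGe (W A : ℂ) : Prop := A.re < W.re ∨ (A.re = W.re ∧ A.im ≤ W.im)

/-! Writing `A = r u²` with `u = exp (iθ/2)` and completing the square gives
`A Z² + B Z + C = r ((u (Z + B/(2A)))² - (B² - 4AC)/(4rA))`. The order `≽` is invariant under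
translation and under multiplication by the positive real `r`, so `A Z² + B Z + C ≽ 0` exactly
when `(u (Z + B/(2A)))² ≽ (B² - 4AC)/(4rA)`; the set equality is this, read through the inverse
map `W ↦ W u⁻¹ - B/(2A)`. -/

theorem cge_iff_sub_cge_zero (X Y : ℂ) : CGe X Y ↔ CGe (X - Y) 0 := by
  simp only [CGe, Complex.sub_re, Complex.sub_im, Complex.zero_re, Complex.zero_im, sub_pos,
    sub_eq_zero, sub_nonneg, eq_comm]

theorem cge_ofReal_mul_zero_iff {r : ℝ} (hr : 0 < r) (X : ℂ) :
    CGe (r * X) 0 ↔ CGe X 0 := by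
  simp [CGe, mul_pos_iff_of_pos_left hr, mul_nonneg_iff_of_pos_left hr, hr.ne', @eq_comm ℝ 0]

theorem quadratic_eq_mul_sq_sub_discr {r : ℝ} (hr : r ≠ 0) {u : ℂ} (hu : u ≠ 0) (B C Z : ℂ) :
    (r * u ^ 2) * Z ^ 2 + B * Z + C =
      r * ((u * (Z + B / (2 * (r * u ^ 2)))) ^ 2 -
        (B ^ 2 - 4 * (r * u ^ 2) * C) / (4 * r * (r * u ^ 2))) := by
  have hr' : (r : ℂ) ≠ 0 := Complex.ofReal_ne_zero.mpr hr
  field_simp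
  ring

theorem image_mul_sub_eq_setOf {u v : ℂ} (huv : u * v = 1) (c : ℂ) (S : Set ℂ) :
    (fun W => W * v - c) '' S = {Z | u * (Z + c) ∈ S} := by
  ext Z
  constructor
  · rintro ⟨W, hW, rfl⟩
    change u * (W * v - c + c) ∈ S
    rwa [show u * (W * v - c + c) = W by linear_combination W * huv]
  · intro hZ
    exact ⟨u * (Z + c), hZ, by linear_combination (Z + c) * huv⟩

theorem quadratic_inequality_solution (r θ : ℝ) (hr : 0 < r) (A B C : ℂ)
    (hA : A = (r : ℂ) * Complex.exp (θ * Complex.I)) :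
    {Z : ℂ | CGe (A * Z ^ 2 + B * Z + C) 0} =
      (fun W => W * Complex.exp (-(θ / 2) * Complex.I) - B / (2 * A)) ''
        {W : ℂ | CGe (W ^ 2) ((B ^ 2 - 4 * A * C) / (4 * (r : ℂ) * A))} ∧
    ∀ Z : ℂ, CGe (A * Z ^ 2 + B * Z + C) 0 ↔
      CGe ((Complex.exp ((θ / 2) * Complex.I) * (Z + B / (2 * A))) ^ 2)
        ((B ^ 2 - 4 * A * C) / (4 * (r : ℂ) * A)) := by
  set u := Complex.exp ((θ / 2) * Complex.I)
  have hA_sq : A = r * u ^ 2 := by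
    rw [hA, ← Complex.exp_nat_mul]
    congr 2
    ring
  have hiff : ∀ Z : ℂ, CGe (A * Z ^ 2 + B * Z + C) 0 ↔
      CGe ((u * (Z + B / (2 * A))) ^ 2) ((B ^ 2 - 4 * A * C) / (4 * (r : ℂ) * A)) := by
    intro Z
    rw [hA_sq, quadratic_eq_mul_sq_sub_discr hr.ne' (Complex.exp_ne_zero _),
      cge_ofReal_mul_zero_iff hr, ← cge_iff_sub_cge_zero]
  have hu_inv : u * Complex.exp (-(θ / 2) * Complex.I) = 1 := by
    rw [← Complex.exp_add, ← Complex.exp_zero]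
    congr 1
    ring
  refine ⟨?_, hiff⟩
  rw [image_mul_sub_eq_setOf hu_inv]
  exact Set.ext hiff
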